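/- Let J ∈ End(V) be the odd operator J = Σ_{a ∈ I} (−1)^{p(a)} E_{−a,a}. Then (J ⊗̂ id_V) ∘ 𝒮 = 𝒮 ∘ (J ⊗̂ id_V) as operators on V ⊗ V (note that J ⊗̂ id_V acts simply by v_a ⊗ v_b ↦ (J v_a) ⊗ v_b). -/

import Mathlib

/-!
STATEMENT 3: For the odd operator J = Σ_a (-1)^{p(a)} E_{-a,a} on V, we have
(J ⊗̂ id_V) ∘ 𝒮 = 𝒮 ∘ (J ⊗̂ id_V) as operators on V ⊗ V.

We model V as the K-vector space with basis {v_i : i ∈ I_{N|N}} (identified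
with functions on the index set), and linear operators on tensor powers of V
as matrices indexed by tuples of indices; composition of operators corresponds
to matrix multiplication.
-/

open scoped BigOperators

set_option synthInstance.maxHeartbeats 400000
set_option maxHeartbeats 1000000

noncomputable section

/-- The base field `K = ℂ(q)`. -/
abbrev K : Type := RatFunc ℂ

/-- The indeterminate `q ∈ ℂ(q)`. -/
noncomputable def q : K := RatFunc.X

/-- `ξ = q - q⁻¹`. -/
noncomputable def ξ : K := q - q⁻¹

/-- The index set `I_{N|N} = {-N, …, -1, 1, …, N} ⊆ ℤ`. -/
def IdxSet (N : ℕ) : Finset ℤ := (Finset.Icc (-(N : ℤ)) N).filter (fun i => i ≠ 0)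

/-- Elements of the index set `I_{N|N}`. -/
abbrev Idx (N : ℕ) := {i : ℤ // i ∈ IdxSet N}

/-- Negation on the index set. -/
def Idx.neg {N : ℕ} (i : Idx N) : Idx N :=
  ⟨-i.1, by
    have h := i.2
    simp only [IdxSet, Finset.mem_filter, Finset.mem_Icc] at h ⊢
    omega⟩

/-- Parity: `p(i) = 0` if `i > 0`, and `p(i) = 1` if `i < 0`. -/
def pty {N : ℕ} (i : Idx N) : ℕ := if 0 < i.1 then 0 else 1

/-- `φ(i,j) = (-1)^{p(j)} (δ_{i,j} + δ_{i,-j})`. -/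
def phi {N : ℕ} (i j : Idx N) : ℤ :=
  (if 0 < j.1 then 1 else -1) * ((if i = j then 1 else 0) + (if i.1 = -j.1 then 1 else 0))

/-- The matrix unit `E_{ij}`, i.e. the operator `E_{ij} v_k = δ_{jk} v_i`. -/
def E {N : ℕ} (i j : Idx N) : Matrix (Idx N) (Idx N) K := Matrix.single i j 1

/-- The super tensor product `A ⊗̂ B` of two operators on `V`, where `B` is
homogeneous of parity `pB`: on basis vectors
`(A ⊗̂ B)(v_a ⊗ v_b) = (-1)^{pB ⬝ p(a)} (A v_a) ⊗ (B v_b)`. -/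
def superT {N : ℕ} (A B : Matrix (Idx N) (Idx N) K) (pB : ℕ) :
    Matrix (Idx N × Idx N) (Idx N × Idx N) K :=
  Matrix.of fun rc cc => ((-1 : K) ^ (pB * pty cc.1)) * A rc.1 cc.1 * B rc.2 cc.2

/-- The operator `𝒮` on `V ⊗ V`:
`𝒮 = Σ_{i,j} q^{φ(i,j)} E_{ii} ⊗̂ E_{jj}
  + ξ Σ_{i<j} (-1)^{p(i)} (E_{ji} + E_{-j,-i}) ⊗̂ E_{ij}`. -/
def S (N : ℕ) : Matrix (Idx N × Idx N) (Idx N × Idx N) K :=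
  (∑ i : Idx N, ∑ j : Idx N, (q ^ phi i j) • superT (E i i) (E j j) 0)
  + ξ • ∑ i : Idx N, ∑ j : Idx N,
      (if i.1 < j.1 then
        ((-1 : K) ^ pty i) • superT (E j i + E j.neg i.neg) (E i j) (pty i + pty j)
      else 0)

/-- The odd operator `J = Σ_{a ∈ I} (-1)^{p(a)} E_{-a,a}` on `V`. -/
def J (N : ℕ) : Matrix (Idx N) (Idx N) K :=
  ∑ a : Idx N, ((-1 : K) ^ pty a) • E a.neg a

/-! Since `J` is odd, `J ⊗̂ id` multiplies `A ⊗̂ B` (with `B` of parity `p`) to `(J A) ⊗̂ B` on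
the left and to `(-1)^p (A J) ⊗̂ B` on the right, so it commutes with `A ⊗̂ B` as soon as
`J A = (-1)^p A J`. Grouped by its second factor `E_jj`, the diagonal part of `𝒮` has as first
factors diagonal matrices invariant under `i ↦ -i` (because `φ(-i,j) = φ(i,j)`), which commute
with `J`; each off-diagonal first factor `X = E_ji + E_{-j,-i}` satisfies
`J X = (-1)^(p(i)+p(j)) X J`. -/

namespace Idx
variable {N : ℕ}

@[simp] lemma neg_neg (i : Idx N) : i.neg.neg = i :=
  Subtype.ext (_root_.neg_neg i.1)

lemma neg_eq_iff_eq_neg {i j : Idx N} : i.neg = j ↔ i = j.neg :=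
  ⟨fun h => h ▸ (neg_neg i).symm, fun h => h ▸ neg_neg j⟩

end Idx

lemma pty_add_pty_neg {N : ℕ} (i : Idx N) : pty i + pty i.neg = 1 := by
  have hi : i.1 ≠ 0 := (Finset.mem_filter.mp i.2).2
  change (if 0 < i.1 then 0 else 1) + (if 0 < -i.1 then 0 else 1) = 1
  split_ifs <;> omega

lemma neg_one_pow_pty_neg {N : ℕ} (i : Idx N) : (-1 : K) ^ pty i.neg = -(-1) ^ pty i := by
  have h := pty_add_pty_neg i
  obtain ⟨hi, hn⟩ | ⟨hi, hn⟩ : pty i = 0 ∧ pty i.neg = 1 ∨ pty i = 1 ∧ pty i.neg = 0 := by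
    omega
  all_goals simp [hi, hn]

lemma phi_neg_left {N : ℕ} (i j : Idx N) : phi i.neg j = phi i j := by
  have hi : i.neg = j ↔ i.1 = -j.1 := by
    rw [Idx.neg_eq_iff_eq_neg, Subtype.ext_iff]; rfl
  have hi' : i.neg.1 = -j.1 ↔ i = j := by
    rw [Subtype.ext_iff]; simp [Idx.neg]
  simp only [phi, hi, hi']
  ring

section superT
variable {N : ℕ}

lemma superT_smul_left (c : K) (A B : Matrix (Idx N) (Idx N) K) (p : ℕ) :
    superT (c • A) B p = c • superT A B p := by
  ext; simp only [superT, Matrix.smul_apply, smul_eq_mul, Matrix.of_apply]; ring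

lemma superT_sum_left {ι : Type*} (s : Finset ι) (A : ι → Matrix (Idx N) (Idx N) K)
    (B : Matrix (Idx N) (Idx N) K) (p : ℕ) :
    superT (∑ i ∈ s, A i) B p = ∑ i ∈ s, superT (A i) B p := by
  ext; simp [superT, Matrix.sum_apply, Finset.mul_sum, Finset.sum_mul]

lemma superT_one_zero_mul (C A B : Matrix (Idx N) (Idx N) K) (p : ℕ) :
    superT C 1 0 * superT A B p = superT (C * A) B p := by
  ext ⟨a, b⟩ ⟨c, d⟩
  simp only [superT, zero_mul, pow_zero, one_mul, Matrix.one_apply, mul_ite, mul_one, mul_zero,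
    Matrix.mul_apply, Matrix.of_apply, ite_mul, Fintype.sum_prod_type, Finset.univ_eq_attach,
    Finset.sum_ite_eq, Finset.mem_attach, ↓reduceIte, Finset.mul_sum, Finset.sum_mul]
  exact Finset.sum_congr rfl fun _ _ => by ring

lemma superT_mul_superT_one_zero_of_odd {C : Matrix (Idx N) (Idx N) K}
    (hC : ∀ x c, C x c ≠ 0 → pty x + pty c = 1) (A B : Matrix (Idx N) (Idx N) K) (p : ℕ) :
    superT A B p * superT C 1 0 = (-1 : K) ^ p • superT (A * C) B p := by
  ext ⟨a, b⟩ ⟨c, d⟩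
  simp only [superT, zero_mul, pow_zero, one_mul, Matrix.one_apply, mul_ite, mul_one, mul_zero,
    Matrix.mul_apply, Matrix.of_apply, Fintype.sum_prod_type, Finset.univ_eq_attach,
    Finset.sum_ite_eq', Finset.mem_attach, ↓reduceIte, Finset.mul_sum, Finset.sum_mul,
    Matrix.smul_apply, smul_eq_mul]
  refine Finset.sum_congr rfl fun x _ => ?_
  by_cases hx : C x c = 0
  · simp [hx]
  have hexp : p + p * pty c = p * pty x + 2 * (p * pty c) :=
    calc p + p * pty c = p * (pty x + pty c) + p * pty c := by rw [hC x c hx, mul_one]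
      _ = p * pty x + 2 * (p * pty c) := by ring
  have hsign : (-1 : K) ^ p * (-1) ^ (p * pty c) = (-1) ^ (p * pty x) := by
    rw [← pow_add, hexp, pow_add, pow_mul (-1 : K) 2, neg_one_sq, one_pow, mul_one]
  linear_combination (A a x * C x c * B b d) * hsign.symm

lemma commute_superT_of_odd {C : Matrix (Idx N) (Idx N) K}
    (hC : ∀ x c, C x c ≠ 0 → pty x + pty c = 1) {A : Matrix (Idx N) (Idx N) K} {p : ℕ}
    (hCA : C * A = (-1 : K) ^ p • (A * C)) (B : Matrix (Idx N) (Idx N) K) :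
    Commute (superT C 1 0) (superT A B p) := by
  rw [Commute, SemiconjBy, superT_one_zero_mul, superT_mul_superT_one_zero_of_odd hC, hCA,
    superT_smul_left]

lemma sum_smul_superT_E_eq_superT_diagonal (f : Idx N → K) (B : Matrix (Idx N) (Idx N) K)
    (p : ℕ) : ∑ i, f i • superT (E i i) B p = superT (Matrix.diagonal f) B p := by
  simp only [← superT_smul_left, ← superT_sum_left, E, Matrix.smul_single, smul_eq_mul, mul_one,
    Matrix.sum_single_eq_diagonal]

end superT

lemma J_apply {N : ℕ} (u v : Idx N) :
    J N u v = if u = v.neg then (-1 : K) ^ pty v else 0 := by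
  rw [J, Matrix.sum_apply, Finset.sum_eq_single v
    (fun a _ hav => by simp [E, hav]) (by simp)]
  simp [E, Matrix.single_apply, eq_comm]

lemma pty_add_pty_eq_one_of_J_ne_zero {N : ℕ} {u v : Idx N} (h : J N u v ≠ 0) :
    pty u + pty v = 1 := by
  by_cases huv : u = v.neg
  · rw [huv, add_comm, pty_add_pty_neg]
  · simp [J_apply, huv] at h

lemma J_mul_E {N : ℕ} (i j : Idx N) : J N * E i j = (-1 : K) ^ pty i • E i.neg j := by
  ext u v
  simp only [E, Matrix.mul_apply, Finset.univ_eq_attach, J_apply, Matrix.single_apply, ite_and,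
    mul_ite, mul_one, mul_zero, Finset.sum_ite_eq, Finset.mem_attach, ↓reduceIte,
    Matrix.smul_apply, smul_eq_mul]
  by_cases hj : j = v <;> simp [hj, eq_comm]

lemma E_mul_J {N : ℕ} (i j : Idx N) : E i j * J N = (-1 : K) ^ pty j.neg • E i j.neg := by
  ext u v
  simp only [E, Matrix.mul_apply, Finset.univ_eq_attach, Matrix.single_apply, J_apply, mul_ite,
    ite_mul, one_mul, zero_mul, mul_zero, Finset.sum_ite_eq', Finset.mem_attach, ↓reduceIte,
    Matrix.smul_apply, Idx.neg_eq_iff_eq_neg, smul_eq_mul, mul_one]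
  split_ifs with h
  · rw [h.2, Idx.neg_neg]
  · rfl

lemma commute_J_diagonal {N : ℕ} {f : Idx N → K} (hf : ∀ i, f i.neg = f i) :
    Commute (J N) (Matrix.diagonal f) := by
  ext u v
  simp only [Matrix.mul_diagonal, Matrix.diagonal_mul, J_apply]
  split_ifs with h
  · rw [h, hf, mul_comm]
  · simp

lemma J_mul_E_add_E_neg {N : ℕ} (i j : Idx N) :
    J N * (E j i + E j.neg i.neg) =
      (-1 : K) ^ (pty i + pty j) • ((E j i + E j.neg i.neg) * J N) := by
  have hsq : ((-1 : K) ^ pty i) * (-1) ^ pty i = 1 := by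
    rw [← pow_add, ← two_mul, pow_mul]; norm_num
  have hsign : (-1 : K) ^ (pty i + pty j) * (-1) ^ pty i = (-1) ^ pty j := by
    rw [pow_add, mul_right_comm, hsq, one_mul]
  simp only [mul_add, add_mul, J_mul_E, E_mul_J, Idx.neg_neg, neg_one_pow_pty_neg]
  rw [smul_add, smul_smul, smul_smul, mul_neg, hsign]
  abel

theorem J_tensor_id_commutes_with_S_general (N : ℕ) :
    superT (J N) 1 0 * S N = S N * superT (J N) 1 0 := by
  have hJ : ∀ u v, J N u v ≠ 0 → pty u + pty v = 1 := fun _ _ =>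
    pty_add_pty_eq_one_of_J_ne_zero
  suffices Commute (superT (J N) 1 0) (S N) from this
  refine .add_right ?_ (.smul_right (.sum_right _ _ _ fun i _ => .sum_right _ _ _ fun j _ => ?_) _)
  · rw [Finset.sum_comm]
    refine .sum_right _ _ _ fun j _ => ?_
    rw [sum_smul_superT_E_eq_superT_diagonal]
    refine commute_superT_of_odd hJ ?_ _
    rw [pow_zero, one_smul]
    exact commute_J_diagonal fun i => by rw [phi_neg_left]
  · split_ifs
    · exact (commute_superT_of_odd hJ (J_mul_E_add_E_neg i j) _).smul_right _
    · exact .zero_right _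

/-- `(J ⊗̂ id_V) ∘ 𝒮 = 𝒮 ∘ (J ⊗̂ id_V)` as operators on `V ⊗ V`.
Here `J ⊗̂ id_V = superT (J N) 1 0` since the identity operator is even
(of parity 0), so that `(J ⊗̂ id_V)(v_a ⊗ v_b) = (J v_a) ⊗ v_b`. -/
theorem J_tensor_id_commutes_with_S (N : ℕ) (hN : 0 < N) :
    superT (J N) 1 0 * S N = S N * superT (J N) 1 0 :=
  J_tensor_id_commutes_with_S_general N

end
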